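/- EdgeConv is permutation equivariant: for every edge function φ : (Fin F → ℝ) × (Fin F → ℝ) → (Fin d → ℝ), every output function ρ : (Fin d → ℝ) × (Fin d → ℝ) → (Fin d' → ℝ), every x : Fin N → (Fin F → ℝ), and every permutation σ of Fin N, the EdgeConv output computed from the reordered input x ∘ σ with the permuted neighbor map k^σ satisfies Y(x ∘ σ, k^σ)_i = Y(x, k)_{σ(i)} for all i : Fin N; equivalently, Y(x ∘ σ, k^σ) = Y(x, k) ∘ σ. -/

import Mathlib

open Finset

/-- The permuted neighbor map `k^σ i j = σ⁻¹ (k (σ i) j)`. -/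
def permNbr {N K : ℕ} (σ : Equiv.Perm (Fin N)) (k : Fin N → Fin K → Fin N) :
    Fin N → Fin K → Fin N :=
  fun i j => σ⁻¹ (k (σ i) j)

/-- The EdgeConv map: `Y(x, k)_i = ρ(m_i, a_i)` where the edge features are
`e_i(j) = φ(x_i, x_{k i j} − x_i)`, `m_i` is their channel-wise maximum and
`a_i` their channel-wise average `(1/K) Σ_j e_i(j)`. -/
noncomputable def edgeConv {N K F d d' : ℕ} (hK : 0 < K)
    (φ : (Fin F → ℝ) × (Fin F → ℝ) → (Fin d → ℝ))
    (ρ : (Fin d → ℝ) × (Fin d → ℝ) → (Fin d' → ℝ))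
    (x : Fin N → Fin F → ℝ) (k : Fin N → Fin K → Fin N) :
    Fin N → Fin d' → ℝ :=
  fun i =>
    let e : Fin K → Fin d → ℝ := fun j => φ (x i, x (k i j) - x i)
    ρ ((fun c => Finset.univ.sup' ⟨⟨0, hK⟩, Finset.mem_univ _⟩ fun j => e j c),
       (1 / (K : ℝ)) • ∑ j : Fin K, e j)

theorem edgeConv_apply_congr {N N' K F d d' : ℕ} (hK : 0 < K)
    (φ : (Fin F → ℝ) × (Fin F → ℝ) → (Fin d → ℝ))
    (ρ : (Fin d → ℝ) × (Fin d → ℝ) → (Fin d' → ℝ))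
    {x : Fin N → Fin F → ℝ} {k : Fin N → Fin K → Fin N}
    {x' : Fin N' → Fin F → ℝ} {k' : Fin N' → Fin K → Fin N'} {i : Fin N} {i' : Fin N'}
    (hx : x' i' = x i) (hnbr : ∀ j, x' (k' i' j) = x (k i j)) :
    edgeConv hK φ ρ x' k' i' = edgeConv hK φ ρ x k i := by
  simp only [edgeConv, hx, hnbr]

theorem comp_permNbr {α : Type*} {N K : ℕ} (x : Fin N → α) (σ : Equiv.Perm (Fin N))
    (k : Fin N → Fin K → Fin N) (i : Fin N) (j : Fin K) :
    (x ∘ σ) (permNbr σ k i j) = x (k (σ i) j) := by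
  simp [permNbr]

theorem edgeConv_perm_equivariant_general {N K F d d' : ℕ} (hK : 0 < K)
    (k : Fin N → Fin K → Fin N)
    (φ : (Fin F → ℝ) × (Fin F → ℝ) → (Fin d → ℝ))
    (ρ : (Fin d → ℝ) × (Fin d → ℝ) → (Fin d' → ℝ))
    (x : Fin N → Fin F → ℝ) (σ : Equiv.Perm (Fin N)) :
    (∀ i : Fin N, edgeConv hK φ ρ (x ∘ σ) (permNbr σ k) i = edgeConv hK φ ρ x k (σ i)) ∧
    edgeConv hK φ ρ (x ∘ σ) (permNbr σ k) = edgeConv hK φ ρ x k ∘ σ := by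
  have h : ∀ i : Fin N, edgeConv hK φ ρ (x ∘ σ) (permNbr σ k) i = edgeConv hK φ ρ x k (σ i) :=
    fun i => edgeConv_apply_congr hK φ ρ rfl fun j => comp_permNbr x σ k i j
  exact ⟨h, funext h⟩

/-- EdgeConv is permutation equivariant:
`Y(x ∘ σ, k^σ)_i = Y(x, k)_{σ(i)}` for all `i`; equivalently
`Y(x ∘ σ, k^σ) = Y(x, k) ∘ σ`. -/
theorem edgeConv_perm_equivariant {N K F d d' : ℕ} (hN : 0 < N) (hK : 0 < K)
    (hF : 0 < F) (hd : 0 < d) (hd' : 0 < d') (k : Fin N → Fin K → Fin N)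
    (φ : (Fin F → ℝ) × (Fin F → ℝ) → (Fin d → ℝ))
    (ρ : (Fin d → ℝ) × (Fin d → ℝ) → (Fin d' → ℝ))
    (x : Fin N → Fin F → ℝ) (σ : Equiv.Perm (Fin N)) :
    (∀ i : Fin N, edgeConv hK φ ρ (x ∘ σ) (permNbr σ k) i = edgeConv hK φ ρ x k (σ i)) ∧
    edgeConv hK φ ρ (x ∘ σ) (permNbr σ k) = edgeConv hK φ ρ x k ∘ σ :=
  edgeConv_perm_equivariant_general hK k φ ρ x σ
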